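/- Let G be a finite group acting transitively on a finite set S, with permutation representation ρ over a field F of characteristic zero. Suppose B ∈ Matrix S S F commutes with ρ(g) for every g ∈ G and is idempotent (B * B = B). Then every diagonal entry of B equals rank(B) / |S|. -/

import Mathlib

/-!
Commuting with the permutation matrix of `g` means `B (g • i) (g • j) = B i j`, so by
transitivity the diagonal of `B` is constant and `trace B = |S| · B i i`. On the other hand an
idempotent is a projection onto its range, so its trace is its rank.
-/

theorem Matrix.trace_eq_rank_of_isIdempotentElem {n R : Type*} [Fintype n] [Field R]
    {B : Matrix n n R} (hB : IsIdempotentElem B) : B.trace = B.rank := by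
  classical
  have hf : IsIdempotentElem (Matrix.toLin' B) := hB.map Matrix.toLinAlgEquiv'
  rw [Matrix.rank, ← Matrix.toLin'_apply',
    ← ((LinearMap.isProj_range_iff_isIdempotentElem _).2 hf).trace, ← Matrix.trace_toLin'_eq]

theorem Matrix.apply_perm_apply_perm_of_mul_permMatrix_comm {n R : Type*} [Fintype n]
    [DecidableEq n] [NonAssocSemiring R] {B : Matrix n n R} {σ : Equiv.Perm n}
    (h : B * σ.permMatrix R = σ.permMatrix R * B) (i j : n) : B (σ i) (σ j) = B i j := by
  have := congrFun₂ h i (σ j)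
  rw [PEquiv.mul_toMatrix_toPEquiv, PEquiv.toMatrix_toPEquiv_mul] at this
  simpa using this.symm

theorem Matrix.trace_eq_card_mul_apply_of_isPretransitive {G S R : Type*} [Group G]
    [MulAction G S] [MulAction.IsPretransitive G S] [Fintype S] [NonAssocSemiring R]
    {B : Matrix S S R} (hB : ∀ (g : G) i, B (g • i) (g • i) = B i i) (i : S) :
    B.trace = Fintype.card S * B i i := by
  have hconst : ∀ j, B j j = B i i := fun j => by
    obtain ⟨g, rfl⟩ := MulAction.exists_smul_eq G i j
    exact hB g i
  simp [Matrix.trace, hconst, Finset.sum_const, nsmul_eq_mul]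

theorem stmt_8_general {G S F : Type*} [Group G] [MulAction G S]
    [MulAction.IsPretransitive G S] [Fintype S] [DecidableEq S] [Field F] [CharZero F]
    (ρ : G → Matrix S S F) (hρ : ∀ g : G, ∀ i j : S, ρ g i j = if g • i = j then 1 else 0)
    (B : Matrix S S F) (hB : ∀ g : G, B * ρ g = ρ g * B) (hidem : B * B = B) :
    ∀ i : S, B i i = (B.rank : F) / (Fintype.card S : F) := by
  intro i
  have hρ_perm : ∀ g : G, ρ g = (MulAction.toPerm g : Equiv.Perm S).permMatrix F := fun g => by
    ext k l
    simp [hρ, PEquiv.toMatrix_apply]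
  have hdiag : ∀ (g : G) j, B (g • j) (g • j) = B j j := fun g j =>
    Matrix.apply_perm_apply_perm_of_mul_permMatrix_comm (σ := MulAction.toPerm g)
      (hρ_perm g ▸ hB g) j j
  have hcard : (Fintype.card S : F) ≠ 0 := Nat.cast_ne_zero.2 (Fintype.card_pos_iff.2 ⟨i⟩).ne'
  rw [← Matrix.trace_eq_rank_of_isIdempotentElem hidem,
    Matrix.trace_eq_card_mul_apply_of_isPretransitive hdiag i, mul_div_cancel_left₀ _ hcard]

/-- Over a field of characteristic zero, an idempotent matrix `B` commuting
with the permutation representation of a transitive action of a finite group `G` on a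
finite set `S` has all diagonal entries equal to `rank(B) / |S|`. -/
theorem stmt_8 {G S F : Type*} [Group G] [Fintype G] [MulAction G S]
    [MulAction.IsPretransitive G S] [Fintype S] [DecidableEq S] [Field F] [CharZero F]
    (ρ : G → Matrix S S F) (hρ : ∀ g : G, ∀ i j : S, ρ g i j = if g • i = j then 1 else 0)
    (B : Matrix S S F) (hB : ∀ g : G, B * ρ g = ρ g * B) (hidem : B * B = B) :
    ∀ i : S, B i i = (B.rank : F) / (Fintype.card S : F) :=
  stmt_8_general ρ hρ B hB hidem
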